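/- Existence of Lamport causes: Let φ_V be a set of violating traces such that φ_V is reordering-closed and ¬φ_V is a safety property, and suppose the trace semantics satisfies: (i) every prefix t0 of a trace t is itself a trace from the same initial configuration, and (ii) any trace t' whose log contains log(t0) as a projected prefix can be decomposed so that t0 concatenated with the residual actions of t' is a trace reordering-equivalent to t'. Then for every violating trace t ∈ φ_V there exists a log l that is a projected prefix of log(t) such that every trace t' (from the same initial configuration) with l ≤_p log(t') satisfies t' ∈ φ_V. -/
import Mathlib


/-- Labels: local labels, synchronization labels, and the silent label ε. -/
inductive Label (I B : Type) where
  | loc : I → B → Label I B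
  | sync : I → B → I → B → Label I B
  | silent : Label I B

def Label.mentions {I B : Type} [DecidableEq I] (i : I) : Label I B → Bool
  | .loc j _ => decide (j = i)
  | .sync js _ jr _ => decide (js = i) || decide (jr = i)
  | .silent => false

def Label.isObservable {I B : Type} : Label I B → Bool
  | .silent => false
  | _ => true

/-- The log of a trace: the non-silent labels, in order. -/
def log {I B : Type} (t : List (Label I B)) : List (Label I B) :=
  t.filter Label.isObservable

def proj {I B : Type} [DecidableEq I] (l : List (Label I B)) (i : I) : List (Label I B) :=
  l.filter (Label.mentions i)

def ProjPrefix {I B : Type} [DecidableEq I] (l' l : List (Label I B)) : Prop :=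
  ∀ i : I, proj l' i <+: proj l i

def ProjSublog {I B : Type} [DecidableEq I] (l' l : List (Label I B)) : Prop :=
  ∀ i : I, (proj l' i).Sublist (proj l i)

/-- Existence of Lamport causes for reordering-closed violations of safety properties. -/
theorem lamport_cause_exists {I B : Type} [DecidableEq I]
    (Tr : Set (List (Label I B)))            -- traces from the initial configuration
    (φV : Set (List (Label I B)))            -- violating traces
    (hRC : ∀ t1 ∈ φV, ∀ t2, (∀ i : I, proj (log t1) i = proj (log t2) i) → t2 ∈ φV)
    (hSafety : ∀ t ∈ φV, ∃ t0, t0 <+: t ∧ ∀ t'', t0 ++ t'' ∈ φV)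
    (hPrefixTrace : ∀ t ∈ Tr, ∀ t0, t0 <+: t → t0 ∈ Tr)
    (hDecomp : ∀ t0 ∈ Tr, ∀ t' ∈ Tr, ProjPrefix (log t0) (log t') →
        ∃ t'', ∀ i : I, proj (log (t0 ++ t'')) i = proj (log t') i) :
    ∀ t ∈ Tr, t ∈ φV →
      ∃ l, ProjPrefix l (log t) ∧ ∀ t' ∈ Tr, ProjPrefix l (log t') → t' ∈ φV := by
  intro t htTr htV
  obtain ⟨t0, ⟨r, hr⟩, hext⟩ := hSafety t htV
  refine ⟨log t0, ?_, ?_⟩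
  · intro i
    refine ⟨proj (log r) i, ?_⟩
    simp [← hr, log, proj, List.filter_append]
  · intro t' ht'Tr hpp
    have ht0Tr : t0 ∈ Tr := hPrefixTrace t htTr t0 ⟨r, hr⟩
    obtain ⟨t'', heq⟩ := hDecomp t0 ht0Tr t' ht'Tr hpp
    exact hRC (t0 ++ t'') (hext t'') t' heq
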